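/- Let f_G : V(G) → {1,…,k1} and f_H : V(H) → {1,…,k2} be proper colorings of connected simple graphs G and H, where at least one of G and H has at least three vertices, and let g : V(G × H) → {1,…,k1} × {1,…,k2} be the coloring of the tensor product G × H given by g((u,v)) = (f_G(u), f_H(v)). If (u1,v1)(u2,v2) is an edge of G × H with N[(u1,v1)] ≠ N[(u2,v2)] but g(N[(u1,v1)]) = g(N[(u2,v2)]), then g(N[(u1,v1)]) = g(N[(u2,v2)]) = {(f_G(u1), f_H(v1)), (f_G(u2), f_H(v2))}. -/

import Mathlib

open SimpleGraph

/-- The closed neighborhood of a vertex: the vertex together with its neighbors. -/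
def SimpleGraph.closedNbhd {V : Type*} (G : SimpleGraph V) (v : V) : Set V :=
  insert v (G.neighborSet v)

/-- A coloring `f` is a locally identifying coloring of `G` if it is proper and, for every
edge `uw` whose endpoints have distinct closed neighborhoods, the sets of colors appearing
on the two closed neighborhoods are distinct. -/
def SimpleGraph.IsLidColoring {V α : Type*} (G : SimpleGraph V) (f : V → α) : Prop :=
  (∀ ⦃u w⦄, G.Adj u w → f u ≠ f w) ∧
  (∀ ⦃u w⦄, G.Adj u w → G.closedNbhd u ≠ G.closedNbhd w →
    f '' G.closedNbhd u ≠ f '' G.closedNbhd w)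

/-- `G` admits a locally identifying coloring with `k` colors. -/
def SimpleGraph.LidColorable {V : Type*} (G : SimpleGraph V) (k : ℕ) : Prop :=
  ∃ f : V → Fin k, G.IsLidColoring f

/-- The lid-chromatic number of `G`: the least number of colors in a lid-coloring of `G`. -/
noncomputable def SimpleGraph.lidChromaticNumber {V : Type*} (G : SimpleGraph V) : ℕ∞ :=
  ⨅ k ∈ {k : ℕ | G.LidColorable k}, (k : ℕ∞)

/-- The tensor (categorical/Kronecker) product of two simple graphs. -/
def SimpleGraph.tensorProd {α β : Type*} (G : SimpleGraph α) (H : SimpleGraph β) :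
    SimpleGraph (α × β) where
  Adj x y := G.Adj x.1 y.1 ∧ H.Adj x.2 y.2
  symm.symm _ _ h := ⟨h.1.symm, h.2.symm⟩
  loopless.irrefl x h := G.loopless.irrefl x.1 h.1

/-!
Let `(u₁, v₁)(u₂, v₂)` be an edge of `G × H` and `a` a neighbor of `u₁`. The color
`(f_G a, f_H v₂)` of `(a, v₂) ∈ N[(u₁, v₁)]` also occurs on `N[(u₂, v₂)]`, but not on a neighbor
`(x, y)` of `(u₂, v₂)`, since `f_H y ≠ f_H v₂`; hence it is the color of `(u₂, v₂)`, i.e.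
`f_G a = f_G u₂`. Symmetrically `f_H b = f_H v₂` for every neighbor `b` of `v₁`, so every vertex of
`N[(u₁, v₁)]` other than `(u₁, v₁)` has the color of `(u₂, v₂)`.
-/

namespace SimpleGraph

variable {α β γ δ : Type*} {G : SimpleGraph α} {H : SimpleGraph β}

theorem mem_closedNbhd_tensorProd {u : α} {v : β} {p : α × β} :
    p ∈ (G.tensorProd H).closedNbhd (u, v) ↔ p = (u, v) ∨ G.Adj u p.1 ∧ H.Adj v p.2 :=
  Iff.rfl

variable {fG : α → γ} {fH : β → δ}

theorem fst_eq_of_mk_mem_image_closedNbhd (hfH : ∀ ⦃u w⦄, H.Adj u w → fH u ≠ fH w)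
    {u : α} {v : β} {c : γ}
    (h : (c, fH v) ∈ Prod.map fG fH '' (G.tensorProd H).closedNbhd (u, v)) : c = fG u := by
  obtain ⟨p, hp, hpc⟩ := h
  rcases mem_closedNbhd_tensorProd.1 hp with rfl | ⟨-, hvp⟩
  · exact (congrArg Prod.fst hpc).symm
  · exact absurd (congrArg Prod.snd hpc).symm (hfH hvp)

theorem snd_eq_of_mk_mem_image_closedNbhd (hfG : ∀ ⦃u w⦄, G.Adj u w → fG u ≠ fG w)
    {u : α} {v : β} {d : δ}
    (h : (fG u, d) ∈ Prod.map fG fH '' (G.tensorProd H).closedNbhd (u, v)) : d = fH v := by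
  obtain ⟨p, hp, hpd⟩ := h
  rcases mem_closedNbhd_tensorProd.1 hp with rfl | ⟨hup, -⟩
  · exact (congrArg Prod.snd hpd).symm
  · exact absurd (congrArg Prod.fst hpd).symm (hfG hup)

theorem image_closedNbhd_tensorProd_eq_pair_of_subset
    (hfG : ∀ ⦃u w⦄, G.Adj u w → fG u ≠ fG w) (hfH : ∀ ⦃u w⦄, H.Adj u w → fH u ≠ fH w)
    {u₁ u₂ : α} {v₁ v₂ : β} (hadj : (G.tensorProd H).Adj (u₁, v₁) (u₂, v₂))
    (hsub : Prod.map fG fH '' (G.tensorProd H).closedNbhd (u₁, v₁)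
      ⊆ Prod.map fG fH '' (G.tensorProd H).closedNbhd (u₂, v₂)) :
    Prod.map fG fH '' (G.tensorProd H).closedNbhd (u₁, v₁)
      = {(fG u₁, fH v₁), (fG u₂, fH v₂)} := by
  obtain ⟨hu, hv⟩ := hadj
  have hG_nbr : ∀ a, G.Adj u₁ a → fG a = fG u₂ := fun a ha =>
    fst_eq_of_mk_mem_image_closedNbhd hfH
      (hsub ⟨(a, v₂), mem_closedNbhd_tensorProd.2 (.inr ⟨ha, hv⟩), rfl⟩)
  have hH_nbr : ∀ b, H.Adj v₁ b → fH b = fH v₂ := fun b hb =>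
    snd_eq_of_mk_mem_image_closedNbhd hfG
      (hsub ⟨(u₂, b), mem_closedNbhd_tensorProd.2 (.inr ⟨hu, hb⟩), rfl⟩)
  apply Set.Subset.antisymm
  · rintro _ ⟨p, hp, rfl⟩
    rcases mem_closedNbhd_tensorProd.1 hp with rfl | ⟨ha, hb⟩
    · exact .inl rfl
    · exact .inr (Prod.ext (hG_nbr _ ha) (hH_nbr _ hb))
  · rintro _ (rfl | rfl)
    · exact ⟨(u₁, v₁), .inl rfl, rfl⟩
    · exact ⟨(u₂, v₂), mem_closedNbhd_tensorProd.2 (.inr ⟨hu, hv⟩), rfl⟩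

end SimpleGraph

theorem lid_stmt_14_general {α β : Type*} (G : SimpleGraph α) (H : SimpleGraph β)
    (k₁ k₂ : ℕ) (fG : α → Fin k₁) (fH : β → Fin k₂)
    (hfG : ∀ ⦃u w⦄, G.Adj u w → fG u ≠ fG w)
    (hfH : ∀ ⦃u w⦄, H.Adj u w → fH u ≠ fH w)
    (g : α × β → Fin k₁ × Fin k₂) (hg : ∀ p, g p = (fG p.1, fH p.2))
    (u₁ u₂ : α) (v₁ v₂ : β)
    (hadj : (G.tensorProd H).Adj (u₁, v₁) (u₂, v₂))
    (hbad : g '' (G.tensorProd H).closedNbhd (u₁, v₁)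
          = g '' (G.tensorProd H).closedNbhd (u₂, v₂)) :
    g '' (G.tensorProd H).closedNbhd (u₁, v₁) = {(fG u₁, fH v₁), (fG u₂, fH v₂)} ∧
    g '' (G.tensorProd H).closedNbhd (u₂, v₂) = {(fG u₁, fH v₁), (fG u₂, fH v₂)} := by
  obtain rfl : g = Prod.map fG fH := funext hg
  refine ⟨image_closedNbhd_tensorProd_eq_pair_of_subset hfG hfH hadj hbad.subset, ?_⟩
  rw [image_closedNbhd_tensorProd_eq_pair_of_subset hfG hfH hadj.symm hbad.symm.subset,
    Set.pair_comm]

/-- If an edge of the tensor product is "bad" for the product coloring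
`g (u, v) = (f_G u, f_H v)`, then both closed neighborhoods receive exactly the two colors
of the endpoints of that edge. -/
theorem lid_stmt_14 {α β : Type*} (G : SimpleGraph α) (H : SimpleGraph β)
    (hG : G.Connected) (hH : H.Connected)
    (h3 : (∃ a b c : α, a ≠ b ∧ a ≠ c ∧ b ≠ c) ∨ (∃ a b c : β, a ≠ b ∧ a ≠ c ∧ b ≠ c))
    (k₁ k₂ : ℕ) (fG : α → Fin k₁) (fH : β → Fin k₂)
    (hfG : ∀ ⦃u w⦄, G.Adj u w → fG u ≠ fG w)
    (hfH : ∀ ⦃u w⦄, H.Adj u w → fH u ≠ fH w)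
    (g : α × β → Fin k₁ × Fin k₂) (hg : ∀ p, g p = (fG p.1, fH p.2))
    (u₁ u₂ : α) (v₁ v₂ : β)
    (hadj : (G.tensorProd H).Adj (u₁, v₁) (u₂, v₂))
    (hN : (G.tensorProd H).closedNbhd (u₁, v₁) ≠ (G.tensorProd H).closedNbhd (u₂, v₂))
    (hbad : g '' (G.tensorProd H).closedNbhd (u₁, v₁)
          = g '' (G.tensorProd H).closedNbhd (u₂, v₂)) :
    g '' (G.tensorProd H).closedNbhd (u₁, v₁) = {(fG u₁, fH v₁), (fG u₂, fH v₂)} ∧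
    g '' (G.tensorProd H).closedNbhd (u₂, v₂) = {(fG u₁, fH v₁), (fG u₂, fH v₂)} :=
  lid_stmt_14_general G H k₁ k₂ fG fH hfG hfH g hg u₁ u₂ v₁ v₂ hadj hbad
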